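/- For a measure-preserving flow Φ = {φ^t} on a probability space (M,μ) and any t ∈ ℝ, the metric entropy satisfies h_μ(φ^t) = |t| · h_μ(φ¹). -/

import Mathlib

open MeasureTheory Filter

/-- Entropy of a countable measurable partition given as a coloring. -/
noncomputable def colorEntropy {M : Type*} [MeasurableSpace M] (μ : Measure M)
    {ι : Type*} [Countable ι] (c : M → ι) : ℝ :=
  ∑' i : ι, Real.negMulLog (μ (c ⁻¹' {i})).toReal

/-- Kolmogorov–Sinai (metric) entropy of a map `T` with respect to `μ`. -/
noncomputable def metricEntropy {M : Type*} [MeasurableSpace M] (T : M → M)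
    (μ : Measure M) : ℝ :=
  ⨆ c : {c : M → ℕ // Measurable c ∧ (Set.range c).Finite},
    Filter.liminf
      (fun n : ℕ => colorEntropy μ (fun x (i : Fin n) => c.1 (T^[(i : ℕ)] x)) / n)
      Filter.atTop

/-!
For `s > 0` and a finite partition `c`, refine `c` along the times `j / N`, `j < N`, into
`D = c ∨ φ^{-1/N} c ∨ ⋯ ∨ φ^{-(N-1)/N} c`. Observed along `m ≈ n s` steps of `φ¹`, `D` records the
cell of `c` at every time of the grid `ℕ / N` below `m`, and every time `i s` with `i < n` lies at
most `1 / N` after one of them. A jointly measurable measure-preserving flow is continuous in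
measure, so `H(φ^{-d} c | c) → 0` as `d → 0`. By the chain rule for conditional entropy the `n`
partitions `φ^{-i s} c` therefore add at most `n ε` to the entropy of the `m` iterates of `D`,
whence `h(φ^s, c) ≤ s h(φ¹, D) + ε`. The same estimate for the flow `u ↦ φ^{s u}` gives the
reverse inequality, so `h(φ^s) = s h(φ¹)`; time reversal `h(φ^{-s}) = h(φ^s)` and `φ⁰ = id` give
the remaining cases.
-/

open Real Topology

namespace Real

lemma mul_log_sub_mul_log_le {a b : ℝ} (ha : 0 ≤ a) (hb : 0 < b) :
    a * log b - a * log a ≤ b - a := by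
  rcases ha.eq_or_lt with rfl | ha
  · simpa using hb.le
  calc a * log b - a * log a = a * log (b / a) := by rw [log_div hb.ne' ha.ne']; ring
    _ ≤ a * (b / a - 1) := by gcongr; exact log_le_sub_one_of_pos (by positivity)
    _ = b - a := by field_simp

/-- The log-sum inequality
`a log (p / a) + a' log (p' / a') ≤ (a + a') log ((p + p') / (a + a'))`, without divisions. -/
lemma negMulLog_add_mul_log_add_le {p a p' a' : ℝ} (ha : 0 ≤ a) (hap : a ≤ p) (ha' : 0 ≤ a')
    (hap' : a' ≤ p') :
    negMulLog a + a * log p + (negMulLog a' + a' * log p') ≤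
      negMulLog (a + a') + (a + a') * log (p + p') := by
  rcases ha.eq_or_lt with rfl | ha
  · simp only [negMulLog_zero, zero_mul, zero_add]
    rcases ha'.eq_or_lt with rfl | ha'
    · simp
    gcongr <;> linarith
  rcases ha'.eq_or_lt with rfl | ha'
  · simp only [negMulLog_zero, zero_mul, add_zero]
    gcongr <;> linarith
  have hp : 0 < p := ha.trans_le hap
  have hp' : 0 < p' := ha'.trans_le hap'
  have hP : 0 < p + p' := by positivity
  have hA : 0 < a + a' := by positivity
  have h := add_le_add
    (mul_log_sub_mul_log_le ha.le (show 0 < p * (a + a') / (p + p') by positivity))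
    (mul_log_sub_mul_log_le ha'.le (show 0 < p' * (a + a') / (p + p') by positivity))
  have hsum : p * (a + a') / (p + p') + p' * (a + a') / (p + p') = a + a' := by field_simp
  rw [log_div (by positivity) hP.ne', log_div (by positivity) hP.ne', log_mul hp.ne' hA.ne',
    log_mul hp'.ne' hA.ne'] at h
  simp only [negMulLog]
  nlinarith

lemma sum_negMulLog_add_mul_log_le {α : Type*} {s : Finset α} {p a : α → ℝ}
    (ha : ∀ i ∈ s, 0 ≤ a i) (hap : ∀ i ∈ s, a i ≤ p i) :
    ∑ i ∈ s, (negMulLog (a i) + a i * log (p i)) ≤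
      negMulLog (∑ i ∈ s, a i) + (∑ i ∈ s, a i) * log (∑ i ∈ s, p i) := by
  have h := Finset.le_sum_of_subadditive_on_pred
    (fun q : ℝ × ℝ => -(negMulLog q.2 + q.2 * log q.1)) (fun q => 0 ≤ q.2 ∧ q.2 ≤ q.1)
    (by simp) (fun q q' hq hq' => by
      have := negMulLog_add_mul_log_add_le hq.1 hq.2 hq'.1 hq'.2
      simp only [Prod.fst_add, Prod.snd_add]
      linarith)
    (fun q q' hq hq' => ⟨add_nonneg hq.1 hq'.1, add_le_add hq.2 hq'.2⟩)
    (fun i => (p i, a i)) (fun i hi => ⟨ha i hi, hap i hi⟩)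
  simp only [Prod.fst_sum, Prod.snd_sum, Finset.sum_neg_distrib] at h
  linarith

section iSup
variable {α β : Sort*} {f : α → ℝ} {g : β → ℝ}

lemma bddAbove_range_of_forall_exists_le_add (hg : BddAbove (Set.range g))
    (h : ∀ a, ∀ ε > 0, ∃ b, f a ≤ g b + ε) : BddAbove (Set.range f) := by
  obtain ⟨K, hK⟩ := hg
  refine ⟨K + 1, ?_⟩
  rintro _ ⟨a, rfl⟩
  obtain ⟨b, hb⟩ := h a 1 one_pos
  linarith [hK ⟨b, rfl⟩]

lemma iSup_le_iSup_of_forall_exists_le_add [Nonempty α] (hg : BddAbove (Set.range g))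
    (h : ∀ a, ∀ ε > 0, ∃ b, f a ≤ g b + ε) : ⨆ a, f a ≤ ⨆ b, g b :=
  ciSup_le fun a => le_of_forall_pos_le_add fun ε hε => by
    obtain ⟨b, hb⟩ := h a ε hε
    linarith [le_ciSup hg b]

lemma iSup_eq_iSup_of_forall_exists_le_add [Nonempty α] [Nonempty β]
    (hfg : ∀ a, ∀ ε > 0, ∃ b, f a ≤ g b + ε) (hgf : ∀ b, ∀ ε > 0, ∃ a, g b ≤ f a + ε) :
    ⨆ a, f a = ⨆ b, g b := by
  by_cases hg : BddAbove (Set.range g)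
  · have hf := bddAbove_range_of_forall_exists_le_add hg hfg
    exact le_antisymm (iSup_le_iSup_of_forall_exists_le_add hg hfg)
      (iSup_le_iSup_of_forall_exists_le_add hf hgf)
  · have hf : ¬BddAbove (Set.range f) := fun hf =>
      hg (bddAbove_range_of_forall_exists_le_add hf hgf)
    rw [iSup_of_not_bddAbove hf, iSup_of_not_bddAbove hg]

end iSup

end Real

lemma tendsto_comp_div_of_tendsto_div {a : ℕ → ℝ} {m : ℕ → ℕ} {L s : ℝ}
    (ha : Tendsto (fun k : ℕ => a k / k) atTop (𝓝 L)) (hm : Tendsto m atTop atTop)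
    (hms : Tendsto (fun n : ℕ => (m n : ℝ) / n) atTop (𝓝 s)) :
    Tendsto (fun n : ℕ => a (m n) / n) atTop (𝓝 (L * s)) := by
  refine ((ha.comp hm).mul hms).congr' ?_
  filter_upwards [hm.eventually_ne_atTop 0] with n hn
  exact div_mul_div_cancel₀ (Nat.cast_ne_zero.2 hn)

lemma exists_sub_mem_Icc_of_lt {N : ℕ} (hN : 0 < N) {t : ℝ} (ht : 0 ≤ t) {m : ℕ}
    (htm : t < m) :
    ∃ (a : Fin m) (j : Fin N), t - (a + j / N) ∈ Set.Icc (0 : ℝ) (1 / N) := by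
  have hN' : (0 : ℝ) < N := Nat.cast_pos.2 hN
  set k := ⌊t * N⌋₊
  have hk : (k : ℝ) ≤ t * N := Nat.floor_le (by positivity)
  have hk' : t * N < k + 1 := Nat.lt_floor_add_one _
  have hkm : k < m * N := by
    have : (k : ℝ) < m * N := hk.trans_lt (by gcongr)
    exact_mod_cast this
  refine ⟨⟨k / N, Nat.div_lt_of_lt_mul (by rwa [mul_comm])⟩, ⟨k % N, Nat.mod_lt _ hN⟩, ?_⟩
  have hdecomp : (k / N : ℕ) + ((k % N : ℕ) : ℝ) / N = k / N := by
    rw [eq_div_iff hN'.ne', add_mul, div_mul_cancel₀ _ hN'.ne']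
    exact_mod_cast Nat.div_add_mod' k N
  simp only [hdecomp, Set.mem_Icc, sub_nonneg]
  constructor
  · rwa [div_le_iff₀ hN']
  · rw [sub_le_iff_le_add, ← add_div, le_div_iff₀ hN']
    linarith

section Coloring

variable {M M' : Type*} [MeasurableSpace M] [MeasurableSpace M'] {ι κ ν : Type*}

structure IsFiniteColoring (c : M → ι) : Prop where
  measurableSet_fiber : ∀ i, MeasurableSet (c ⁻¹' {i})
  finite_range : (Set.range c).Finite

namespace IsFiniteColoring

variable {c : M → ι} {d : M → κ}

lemma measurableSet_preimage (hc : IsFiniteColoring c) (s : Set ι) :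
    MeasurableSet (c ⁻¹' s) := by
  have : c ⁻¹' s = ⋃ i ∈ Set.range c ∩ s, c ⁻¹' {i} := by ext x; simp
  rw [this]
  exact (hc.finite_range.subset Set.inter_subset_left).measurableSet_biUnion
    fun i _ => hc.measurableSet_fiber i

lemma comp (hc : IsFiniteColoring c) (g : ι → κ) : IsFiniteColoring (g ∘ c) :=
  ⟨fun k => hc.measurableSet_preimage (g ⁻¹' {k}),
    Set.range_comp g c ▸ hc.finite_range.image g⟩

lemma comp_measurable (hc : IsFiniteColoring c) {T : M' → M} (hT : Measurable T) :
    IsFiniteColoring (c ∘ T) :=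
  ⟨fun i => hT (hc.measurableSet_fiber i),
    hc.finite_range.subset (Set.range_comp_subset_range T c)⟩

lemma prodMk (hc : IsFiniteColoring c) (hd : IsFiniteColoring d) :
    IsFiniteColoring fun x => (c x, d x) := by
  refine ⟨fun z => ?_, (hc.finite_range.prod hd.finite_range).subset ?_⟩
  · have : (fun x => (c x, d x)) ⁻¹' {z} = c ⁻¹' {z.1} ∩ d ⁻¹' {z.2} := by
      ext x; simp [Prod.ext_iff]
    exact this ▸ (hc.measurableSet_fiber _).inter (hd.measurableSet_fiber _)
  · rintro _ ⟨x, rfl⟩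
    exact ⟨⟨x, rfl⟩, x, rfl⟩

lemma pi {α : Type*} [Finite α] {u : α → M → ι} (hu : ∀ a, IsFiniteColoring (u a)) :
    IsFiniteColoring fun x a => u a x := by
  refine ⟨fun f => ?_, (Set.Finite.pi fun a => (hu a).finite_range).subset ?_⟩
  · have : (fun x a => u a x) ⁻¹' {f} = ⋂ a, u a ⁻¹' {f a} := by
      ext x; simp [funext_iff]
    exact this ▸ MeasurableSet.iInter fun a => (hu a).measurableSet_fiber (f a)
  · rintro _ ⟨x, rfl⟩ a -
    exact ⟨x, rfl⟩

end IsFiniteColoring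

lemma isFiniteColoring_iff_measurable {c : M → ℕ} :
    IsFiniteColoring c ↔ Measurable c ∧ (Set.range c).Finite :=
  ⟨fun hc => ⟨measurable_to_countable' hc.measurableSet_fiber, hc.finite_range⟩,
    fun hc => ⟨fun i => hc.1 (measurableSet_singleton i), hc.2⟩⟩

variable {μ : Measure M}

lemma measureReal_eq_sum_inter_fiber [IsFiniteMeasure μ] {e : M → κ}
    (he : ∀ k, MeasurableSet (e ⁻¹' {k})) {t : Finset κ} (ht : Set.range e ⊆ t) (S : Set M) :
    μ.real S = ∑ k ∈ t, μ.real (S ∩ e ⁻¹' {k}) := by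
  have h := sum_measureReal_preimage_singleton (μ := μ.restrict S) t fun k _ => he k
  rw [Set.preimage_eq_univ_iff.2 ht, measureReal_restrict_apply_univ] at h
  rw [← h]
  exact Finset.sum_congr rfl fun k _ => by
    rw [measureReal_restrict_apply (he k), Set.inter_comm]

lemma measureReal_inter_preimage_comp_eq_sum [IsFiniteMeasure μ] [DecidableEq ν] {e : M → κ}
    (he : IsFiniteColoring e) {t : Finset κ} (ht : Set.range e ⊆ t) (g : κ → ν) (j : ν)
    (S : Set M) :
    μ.real (S ∩ (g ∘ e) ⁻¹' {j}) = ∑ k ∈ t with g k = j, μ.real (S ∩ e ⁻¹' {k}) := by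
  rw [measureReal_eq_sum_inter_fiber he.measurableSet_fiber ht, Finset.sum_filter]
  refine Finset.sum_congr rfl fun k _ => ?_
  split_ifs with hk
  · congr 1; ext x; aesop
  · convert measureReal_empty (μ := μ); ext x; aesop

variable [Countable ι] [Countable κ] [Countable ν]

lemma colorEntropy_eq_sum {c : M → ι} {s : Finset ι} (hs : Set.range c ⊆ s) :
    colorEntropy μ c = ∑ i ∈ s, negMulLog (μ.real (c ⁻¹' {i})) := by
  refine tsum_eq_sum fun i hi => ?_
  have : c ⁻¹' {i} = ∅ := Set.preimage_singleton_eq_empty.2 fun h => hi (hs h)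
  simp [this]

lemma colorEntropy_comp_injective {g : ι → κ} (hg : Function.Injective g) (c : M → ι) :
    colorEntropy μ (g ∘ c) = colorEntropy μ c := by
  have hsupp : Function.support (fun k => negMulLog (μ ((g ∘ c) ⁻¹' {k})).toReal) ⊆
      Set.range g := by
    intro k hk
    by_contra hg'
    have : (g ∘ c) ⁻¹' {k} = ∅ :=
      Set.preimage_singleton_eq_empty.2 fun h => hg' (Set.range_comp_subset_range c g h)
    simp [this] at hk
  rw [colorEntropy, ← hg.tsum_eq hsupp]
  refine tsum_congr fun i => ?_
  congr 3
  ext x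
  simp [hg.eq_iff]

lemma colorEntropy_comp_of_measurePreserving {μ' : Measure M'} {T : M' → M}
    (hT : MeasurePreserving T μ' μ) {c : M → ι} (hc : ∀ i, MeasurableSet (c ⁻¹' {i})) :
    colorEntropy μ' (c ∘ T) = colorEntropy μ c :=
  tsum_congr fun i => by
    rw [Set.preimage_comp, hT.measure_preimage (hc i).nullMeasurableSet]

lemma colorEntropy_const [IsProbabilityMeasure μ] (i : ι) :
    colorEntropy μ (fun _ : M => i) = 0 := by
  rw [colorEntropy_eq_sum (s := {i}) (by simp)]
  simp

lemma colorEntropy_nonneg [IsProbabilityMeasure μ] (c : M → ι) : 0 ≤ colorEntropy μ c :=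
  tsum_nonneg fun _ => negMulLog_nonneg ENNReal.toReal_nonneg measureReal_le_one

end Coloring

section ConditionalEntropy

variable {M M' : Type*} [MeasurableSpace M] [MeasurableSpace M'] {ι κ ν : Type*}
  [Countable ι] [Countable κ] [Countable ν] {μ : Measure M}

noncomputable def condColorEntropy (μ : Measure M) (u : M → ι) (e : M → κ) : ℝ :=
  colorEntropy μ (fun x => (u x, e x)) - colorEntropy μ e

variable {u : M → ι} {e : M → κ}

lemma condColorEntropy_eq_sum [IsFiniteMeasure μ] (hu : ∀ i, MeasurableSet (u ⁻¹' {i}))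
    {s : Finset ι}
    {t : Finset κ} (hs : Set.range u ⊆ s) (ht : Set.range e ⊆ t) :
    condColorEntropy μ u e = ∑ i ∈ s, ∑ k ∈ t,
      (negMulLog (μ.real (u ⁻¹' {i} ∩ e ⁻¹' {k})) +
        μ.real (u ⁻¹' {i} ∩ e ⁻¹' {k}) * log (μ.real (e ⁻¹' {k}))) := by
  have hst : Set.range (fun x => (u x, e x)) ⊆ ↑(s ×ˢ t) := by
    rintro _ ⟨x, rfl⟩
    exact Finset.mem_product.2 ⟨hs ⟨x, rfl⟩, ht ⟨x, rfl⟩⟩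
  have hfiber : ∀ i k, (fun x => (u x, e x)) ⁻¹' {(i, k)} = u ⁻¹' {i} ∩ e ⁻¹' {k} := by
    intro i k; ext x; simp [Prod.ext_iff]
  have he : ∑ k ∈ t, negMulLog (μ.real (e ⁻¹' {k})) =
      -∑ i ∈ s, ∑ k ∈ t, μ.real (u ⁻¹' {i} ∩ e ⁻¹' {k}) * log (μ.real (e ⁻¹' {k})) := by
    rw [Finset.sum_comm, ← Finset.sum_neg_distrib]
    refine Finset.sum_congr rfl fun k _ => ?_
    rw [← Finset.sum_mul, negMulLog, measureReal_eq_sum_inter_fiber hu hs]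
    simp only [Set.inter_comm (e ⁻¹' {k})]
    ring
  rw [condColorEntropy, colorEntropy_eq_sum hst, colorEntropy_eq_sum ht, Finset.sum_product,
    he]
  simp only [hfiber, Finset.sum_add_distrib]
  ring

theorem condColorEntropy_le_comp [IsFiniteMeasure μ] (hu : IsFiniteColoring u)
    (he : IsFiniteColoring e) (g : κ → ν) :
    condColorEntropy μ u e ≤ condColorEntropy μ u (g ∘ e) := by
  classical
  have hs : Set.range u ⊆ hu.finite_range.toFinset := by simp
  have ht : Set.range e ⊆ he.finite_range.toFinset := by simp
  have ht' : Set.range (g ∘ e) ⊆ he.finite_range.toFinset.image g := by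
    simp [Set.range_comp]
  rw [condColorEntropy_eq_sum hu.measurableSet_fiber hs ht,
    condColorEntropy_eq_sum hu.measurableSet_fiber hs ht']
  -- group the cells of `e` by the cells of `g ∘ e`, and apply the log-sum inequality to each group
  refine Finset.sum_le_sum fun i _ => ?_
  rw [← Finset.sum_fiberwise_of_maps_to fun k hk => Finset.mem_image_of_mem g hk]
  refine Finset.sum_le_sum fun j _ => ?_
  have hP := measureReal_inter_preimage_comp_eq_sum (μ := μ) he ht g j Set.univ
  simp only [Set.univ_inter] at hP
  rw [measureReal_inter_preimage_comp_eq_sum he ht g j, hP]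
  exact sum_negMulLog_add_mul_log_le (fun _ _ => measureReal_nonneg)
    fun _ _ => measureReal_mono Set.inter_subset_right

lemma condColorEntropy_comp_injective {g : ι → ν} (hg : Function.Injective g) (u : M → ι)
    (e : M → κ) : condColorEntropy μ (g ∘ u) e = condColorEntropy μ u e := by
  rw [condColorEntropy, condColorEntropy,
    ← colorEntropy_comp_injective (hg.prodMap Function.injective_id) fun x => (u x, e x)]
  rfl

lemma condColorEntropy_comp_of_measurePreserving {μ' : Measure M'} {T : M' → M}
    (hT : MeasurePreserving T μ' μ) (hu : IsFiniteColoring u) (he : IsFiniteColoring e) :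
    condColorEntropy μ' (u ∘ T) (e ∘ T) = condColorEntropy μ u e := by
  rw [condColorEntropy, condColorEntropy,
    ← colorEntropy_comp_of_measurePreserving hT (hu.prodMk he).measurableSet_fiber,
    ← colorEntropy_comp_of_measurePreserving hT he.measurableSet_fiber]
  rfl

lemma condColorEntropy_const (i : ι) (e : M → κ) :
    condColorEntropy μ (fun _ => i) e = 0 :=
  sub_eq_zero.2 <| colorEntropy_comp_injective (g := Prod.mk i)
    (fun _ _ h => (Prod.ext_iff.1 h).2) e

lemma condColorEntropy_self_prodMk :
    condColorEntropy μ u (fun x => (u x, e x)) = 0 :=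
  sub_eq_zero.2 <| colorEntropy_comp_injective (g := fun z : ι × κ => (z.1, z))
    (fun _ _ h => (Prod.ext_iff.1 h).2) fun x => (u x, e x)

lemma condColorEntropy_nonneg [IsFiniteMeasure μ] (hu : IsFiniteColoring u)
    (he : IsFiniteColoring e) : 0 ≤ condColorEntropy μ u e := by
  have h := condColorEntropy_le_comp (μ := μ) hu (hu.prodMk he) Prod.snd
  rwa [condColorEntropy_self_prodMk] at h

lemma colorEntropy_le_add_condColorEntropy [IsFiniteMeasure μ] (hu : IsFiniteColoring u)
    (he : IsFiniteColoring e) :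
    colorEntropy μ u ≤ colorEntropy μ e + condColorEntropy μ u e := by
  have h := condColorEntropy_nonneg (μ := μ) he hu
  have hswap : colorEntropy μ (fun x => (e x, u x)) = colorEntropy μ (fun x => (u x, e x)) :=
    colorEntropy_comp_injective (Prod.swap_injective (α := ι) (β := κ)) fun x => (u x, e x)
  rw [condColorEntropy] at h ⊢
  linarith

lemma condColorEntropy_le [IsProbabilityMeasure μ] (hu : IsFiniteColoring u)
    (he : IsFiniteColoring e) : condColorEntropy μ u e ≤ colorEntropy μ u := by
  have h := condColorEntropy_le_comp (μ := μ) hu he fun _ => ()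
  have hunit : condColorEntropy μ u ((fun _ => ()) ∘ e) = colorEntropy μ u := by
    simp only [condColorEntropy, Function.comp_def, colorEntropy_const, sub_zero]
    exact colorEntropy_comp_injective (g := fun i => (i, ()))
      (fun _ _ h => (Prod.ext_iff.1 h).1) u
  exact hunit ▸ h

lemma colorEntropy_prodMk_le [IsProbabilityMeasure μ] (hu : IsFiniteColoring u)
    (he : IsFiniteColoring e) :
    colorEntropy μ (fun x => (u x, e x)) ≤ colorEntropy μ u + colorEntropy μ e := by
  have h := condColorEntropy_le (μ := μ) hu he
  rw [condColorEntropy] at h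
  linarith

lemma condColorEntropy_prodMk_le [IsFiniteMeasure μ] {a : M → ι} {b : M → κ} {v : M → ν}
    (ha : IsFiniteColoring a) (hb : IsFiniteColoring b) (hv : IsFiniteColoring v) :
    condColorEntropy μ (fun x => (a x, b x)) v ≤
      condColorEntropy μ a v + condColorEntropy μ b v := by
  have h := condColorEntropy_le_comp (μ := μ) hb (ha.prodMk hv) Prod.snd
  have hswap : colorEntropy μ (fun x => (b x, (a x, v x))) =
      colorEntropy μ (fun x => ((a x, b x), v x)) :=
    colorEntropy_comp_injective (g := fun z : (ι × κ) × ν => (z.1.2, (z.1.1, z.2)))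
      (by rintro ⟨⟨_, _⟩, _⟩ ⟨⟨_, _⟩, _⟩ h; simp_all) fun x => ((a x, b x), v x)
  simp only [condColorEntropy, Function.comp_def, hswap] at h ⊢
  linarith

lemma condColorEntropy_pi_le [IsFiniteMeasure μ] {v : M → κ} (hv : IsFiniteColoring v) :
    ∀ {n : ℕ} {u : Fin n → M → ι}, (∀ i, IsFiniteColoring (u i)) →
      condColorEntropy μ (fun x i => u i x) v ≤ ∑ i, condColorEntropy μ (u i) v
  | 0, u, _ => by
    rw [Subsingleton.elim (fun x i => u i x) fun _ => finZeroElim, condColorEntropy_const]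
    simp
  | n + 1, u, hu => by
    have hcons : (fun x i => u i x) = Fin.consEquiv (fun _ => ι) ∘
        fun x => (u 0 x, fun i : Fin n => u i.succ x) := by
      ext x i
      cases i using Fin.cases <;> rfl
    rw [hcons, condColorEntropy_comp_injective (Fin.consEquiv fun _ => ι).injective,
      Fin.sum_univ_succ]
    have ih := condColorEntropy_pi_le hv (u := fun i => u i.succ) fun i => hu i.succ
    have := condColorEntropy_prodMk_le (μ := μ) (hu 0)
      (IsFiniteColoring.pi fun i : Fin n => hu i.succ) hv
    linarith

end ConditionalEntropy

section EntropyRate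

variable {M ι κ : Type*} {T : M → M} {c : M → ι}

def orbitColoring (T : M → M) (c : M → ι) (n : ℕ) : M → Fin n → ι :=
  fun x i => c (T^[i] x)

lemma orbitColoring_add (T : M → M) (c : M → ι) (m n : ℕ) :
    orbitColoring T c (m + n) = Fin.appendEquiv m n ∘
      fun x => (orbitColoring T c m x, (orbitColoring T c n ∘ T^[m]) x) := by
  ext x i
  cases i using Fin.addCases <;>
    simp [orbitColoring, Fin.appendEquiv, ← Function.iterate_add_apply, add_comm]

lemma orbitColoring_id (c : M → ι) (n : ℕ) :
    orbitColoring id c n = (fun i (_ : Fin n) => i) ∘ c := by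
  ext x i
  simp [orbitColoring]

variable [MeasurableSpace M] {μ : Measure M}

noncomputable def entropyRate [Countable ι] (μ : Measure M) (T : M → M) (c : M → ι) : ℝ :=
  liminf (fun n : ℕ => colorEntropy μ (orbitColoring T c n) / n) atTop

lemma metricEntropy_eq_iSup_entropyRate (T : M → M) :
    metricEntropy T μ =
      ⨆ c : {c : M → ℕ // Measurable c ∧ (Set.range c).Finite}, entropyRate μ T c.1 :=
  rfl

lemma IsFiniteColoring.orbitColoring (hc : IsFiniteColoring c) (hT : Measurable T) (n : ℕ) :
    IsFiniteColoring (orbitColoring T c n) :=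
  .pi fun i => hc.comp_measurable (hT.iterate i)

variable [Countable ι] [Countable κ]

lemma colorEntropy_orbitColoring_subadditive [IsProbabilityMeasure μ]
    (hT : MeasurePreserving T μ μ) (hc : IsFiniteColoring c) :
    Subadditive fun n => colorEntropy μ (orbitColoring T c n) := by
  intro m n
  show colorEntropy μ (orbitColoring T c (m + n)) ≤
    colorEntropy μ (orbitColoring T c m) + colorEntropy μ (orbitColoring T c n)
  have hcn := hc.orbitColoring hT.measurable n
  rw [orbitColoring_add, colorEntropy_comp_injective (Fin.appendEquiv m n).injective,
    ← colorEntropy_comp_of_measurePreserving (hT.iterate m) hcn.measurableSet_fiber]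
  exact colorEntropy_prodMk_le (hc.orbitColoring hT.measurable m)
    (hcn.comp_measurable (hT.measurable.iterate m))

lemma tendsto_entropyRate [IsProbabilityMeasure μ] (hT : MeasurePreserving T μ μ)
    (hc : IsFiniteColoring c) :
    Tendsto (fun n : ℕ => colorEntropy μ (orbitColoring T c n) / n) atTop
      (𝓝 (entropyRate μ T c)) := by
  have h := (colorEntropy_orbitColoring_subadditive hT hc).tendsto_lim
    ⟨0, by rintro _ ⟨n, rfl⟩; exact div_nonneg (colorEntropy_nonneg _) n.cast_nonneg⟩
  rwa [entropyRate, h.liminf_eq]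

lemma entropyRate_comp_injective {g : ι → κ} (hg : Function.Injective g) :
    entropyRate μ T (g ∘ c) = entropyRate μ T c := by
  have h : ∀ n, colorEntropy μ (orbitColoring T (g ∘ c) n) =
      colorEntropy μ (orbitColoring T c n) := fun n =>
    colorEntropy_comp_injective (g := fun f : Fin n → ι => g ∘ f) hg.comp_left _
  simp only [entropyRate, h]

lemma entropyRate_id (c : M → ι) : entropyRate μ id c = 0 := by
  have h : ∀ n ≥ 1, colorEntropy μ (orbitColoring id c n) = colorEntropy μ c := fun n hn => by
    rw [orbitColoring_id, colorEntropy_comp_injective fun _ _ h => congrFun h ⟨0, hn⟩]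
  refine ((tendsto_const_div_atTop_nhds_zero_nat (colorEntropy μ c)).congr' ?_).liminf_eq
  filter_upwards [eventually_ge_atTop 1] with n hn
  rw [h n hn]

end EntropyRate

open scoped symmDiff

lemma tendsto_volume_preimage_add_right_symmDiff {S : Set ℝ} (hS : MeasurableSet S)
    (hS_fin : volume S ≠ ⊤) :
    Tendsto (fun u : ℝ => volume (((· + u) ⁻¹' S) ∆ S)) (𝓝 0) (𝓝 0) := by
  have hcont : Continuous fun u : ℝ => ContinuousMap.addRight u :=
    ContinuousMap.continuous_of_continuous_uncurry _ (by simp [Function.uncurry_def]; fun_prop)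
  have h := tendsto_measure_symmDiff_preimage_nhds_zero (hcont.tendsto 0)
    (.of_forall fun u => measurePreserving_add_right volume u)
    (measurePreserving_add_right volume 0) hS.nullMeasurableSet hS_fin
  simpa using h

lemma tendsto_volume_Icc_preimage_add_right_symmDiff {S : Set ℝ} (hS : MeasurableSet S) :
    Tendsto (fun u : ℝ => volume.restrict (Set.Icc 0 1) (((· + u) ⁻¹' S) ∆ S)) (𝓝 0) (𝓝 0) := by
  set S' := S ∩ Set.Icc (-1) 2
  have hS' : MeasurableSet S' := hS.inter measurableSet_Icc
  have hS'_fin : volume S' ≠ ⊤ :=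
    ((measure_mono Set.inter_subset_right).trans_lt measure_Icc_lt_top).ne
  refine tendsto_of_tendsto_of_tendsto_of_le_of_le' tendsto_const_nhds
    (tendsto_volume_preimage_add_right_symmDiff hS' hS'_fin) (.of_forall fun _ => zero_le) ?_
  filter_upwards [Metric.closedBall_mem_nhds (0 : ℝ) one_pos] with u hu
  rw [Metric.mem_closedBall, Real.dist_0_eq_abs, abs_le] at hu
  -- on `[0, 1]`, translating by `|u| ≤ 1` only sees `S` inside `[-1, 2]`
  rw [Measure.restrict_apply' measurableSet_Icc]
  refine measure_mono fun s ⟨hs, hs01⟩ => ?_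
  simp only [Set.mem_symmDiff, Set.mem_preimage, Set.mem_Icc, S', Set.mem_inter_iff] at hs hs01 ⊢
  rcases hs with h | h
  · exact .inl ⟨⟨h.1, by linarith, by linarith⟩, fun h' => h.2 h'.1⟩
  · exact .inr ⟨⟨h.1, by linarith, by linarith⟩, fun h' => h.2 h'.1⟩

section Flow

variable {M : Type*} [MeasurableSpace M] {μ : Measure M}

structure IsMeasurePreservingFlow (μ : Measure M) (φ : ℝ → M → M) : Prop where
  map_zero : φ 0 = id
  map_add : ∀ s t, φ (s + t) = φ s ∘ φ t
  measurable : Measurable fun p : ℝ × M => φ p.1 p.2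
  measurePreserving : ∀ t, MeasurePreserving (φ t) μ μ

namespace IsMeasurePreservingFlow

variable {φ : ℝ → M → M} {ι : Type*}

lemma apply_apply (hφ : IsMeasurePreservingFlow μ φ) (s t : ℝ) (x : M) :
    φ s (φ t x) = φ (s + t) x := by
  rw [hφ.map_add]; rfl

lemma iterate (hφ : IsMeasurePreservingFlow μ φ) (u : ℝ) (k : ℕ) :
    (φ u)^[k] = φ (k * u) := by
  induction k with
  | zero => simp [hφ.map_zero]
  | succ k ih => rw [Function.iterate_succ', ih, ← hφ.map_add]; push_cast; ring_nf

lemma comp_mul (hφ : IsMeasurePreservingFlow μ φ) (a : ℝ) :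
    IsMeasurePreservingFlow μ fun t => φ (a * t) where
  map_zero := by simp [hφ.map_zero]
  map_add s t := by simp only [mul_add, hφ.map_add]
  measurable := hφ.measurable.comp ((measurable_const.mul measurable_fst).prodMk measurable_snd)
  measurePreserving t := hφ.measurePreserving (a * t)

lemma orbitColoring_neg (hφ : IsMeasurePreservingFlow μ φ) (c : M → ι) (u : ℝ) (n : ℕ) :
    orbitColoring (φ (-u)) c n =
      ((fun f => f ∘ Fin.rev) ∘ orbitColoring (φ u) c n) ∘ φ (-((n - 1) * u)) := by
  ext x i
  simp only [orbitColoring, Function.comp_apply, hφ.iterate, hφ.apply_apply, Fin.val_rev]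
  congr 2
  rw [Nat.cast_sub (by omega)]
  push_cast
  ring

variable [Countable ι]

/-- The flow is only jointly measurable: averaging over a unit time interval (Fubini) reduces the
claim, orbit by orbit, to the continuity of translations on `ℝ`. -/
theorem tendsto_measure_preimage_symmDiff [IsFiniteMeasure μ] (hφ : IsMeasurePreservingFlow μ φ)
    {A : Set M} (hA : MeasurableSet A) :
    Tendsto (fun u => μ ((φ u ⁻¹' A) ∆ A)) (𝓝 0) (𝓝 0) := by
  set ν := volume.restrict (Set.Icc (0 : ℝ) 1)
  have hν : ν Set.univ = 1 := by simp [ν]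
  set E : ℝ → Set (ℝ × M) := fun u => {p | φ (p.1 + u) p.2 ∈ A} ∆ {p | φ p.1 p.2 ∈ A}
  have hE : ∀ u, MeasurableSet (E u) := fun u =>
    (hφ.measurable.comp ((measurable_fst.add_const u).prodMk measurable_snd) hA).symmDiff
      (hφ.measurable hA)
  have hfubini : ∀ u, μ ((φ u ⁻¹' A) ∆ A) = ∫⁻ x, ν ((fun s => (s, x)) ⁻¹' E u) ∂μ := by
    intro u
    have hsection : ∀ s, Prod.mk s ⁻¹' E u = φ s ⁻¹' ((φ u ⁻¹' A) ∆ A) := by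
      intro s
      ext x
      simp only [E, Set.mem_preimage, Set.preimage_symmDiff, Set.mem_symmDiff, Set.mem_ofPred_eq,
        hφ.apply_apply, add_comm]
    calc μ ((φ u ⁻¹' A) ∆ A) = ∫⁻ _, μ ((φ u ⁻¹' A) ∆ A) ∂ν := by simp [hν]
      _ = ∫⁻ s, μ (Prod.mk s ⁻¹' E u) ∂ν := by
        refine lintegral_congr fun s => ?_
        rw [hsection, (hφ.measurePreserving s).measure_preimage
          (((hφ.measurePreserving u).measurable hA).symmDiff hA).nullMeasurableSet]
      _ = ∫⁻ x, ν ((fun s => (s, x)) ⁻¹' E u) ∂μ := by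
        rw [← Measure.prod_apply (hE u), Measure.prod_apply_symm (hE u)]
  simp_rw [hfubini]
  rw [← lintegral_zero]
  refine tendsto_lintegral_filter_of_dominated_convergence 1
    (.of_forall fun u => measurable_measure_prodMk_right (hE u))
    (.of_forall fun u => .of_forall fun x => (measure_mono (Set.subset_univ _)).trans_eq hν)
    (by simp) (.of_forall fun x => ?_)
  exact tendsto_volume_Icc_preimage_add_right_symmDiff
    (hφ.measurable.comp (measurable_id.prodMk measurable_const) hA)

lemma tendsto_measureReal_preimage_inter [IsFiniteMeasure μ] (hφ : IsMeasurePreservingFlow μ φ)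
    {A B : Set M} (hA : MeasurableSet A) (hB : MeasurableSet B) :
    Tendsto (fun u => μ.real (φ u ⁻¹' A ∩ B)) (𝓝 0) (𝓝 (μ.real (A ∩ B))) := by
  have h0 : Tendsto (fun u => μ.real ((φ u ⁻¹' A) ∆ A)) (𝓝 0) (𝓝 0) := by
    have h := (ENNReal.tendsto_toReal ENNReal.zero_ne_top).comp
      (hφ.tendsto_measure_preimage_symmDiff hA)
    rwa [ENNReal.toReal_zero] at h
  refine tendsto_iff_dist_tendsto_zero.2 (squeeze_zero (fun _ => dist_nonneg) (fun u => ?_) h0)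
  have hAu : MeasurableSet (φ u ⁻¹' A) := (hφ.measurePreserving u).measurable hA
  rw [Real.dist_eq]
  refine (abs_measureReal_sub_le_measureReal_symmDiff (hAu.inter hB).nullMeasurableSet
    (hA.inter hB).nullMeasurableSet).trans (measureReal_mono ?_)
  rw [← Set.inter_symmDiff_distrib_right]
  exact Set.inter_subset_left

theorem tendsto_condColorEntropy [IsFiniteMeasure μ] (hφ : IsMeasurePreservingFlow μ φ)
    {c : M → ι} (hc : IsFiniteColoring c) :
    Tendsto (fun u => condColorEntropy μ (c ∘ φ u) c) (𝓝 0) (𝓝 0) := by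
  set T := hc.finite_range.toFinset
  have hT : Set.range c ⊆ T := by simp [T]
  have hTT : ∀ f : M → ι, Set.range f ⊆ T → Set.range (fun x => (f x, c x)) ⊆ ↑(T ×ˢ T) := by
    rintro f hf _ ⟨x, rfl⟩
    exact Finset.mem_product.2 ⟨hf ⟨x, rfl⟩, hT ⟨x, rfl⟩⟩
  have hfiber : ∀ (f : M → ι) (z : ι × ι),
      (fun x => (f x, c x)) ⁻¹' {z} = f ⁻¹' {z.1} ∩ c ⁻¹' {z.2} := by
    intro f z; ext x; simp [Prod.ext_iff]
  have hdiag : colorEntropy μ (fun x => (c x, c x)) = colorEntropy μ c :=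
    colorEntropy_comp_injective (g := fun i => (i, i)) (fun _ _ h => (Prod.ext_iff.1 h).1) c
  have h : Tendsto (fun u => colorEntropy μ fun x => ((c ∘ φ u) x, c x)) (𝓝 0)
      (𝓝 (colorEntropy μ c)) := by
    rw [← hdiag, colorEntropy_eq_sum (hTT c hT)]
    simp only [colorEntropy_eq_sum (hTT _ ((Set.range_comp_subset_range _ _).trans hT)), hfiber,
      Set.preimage_comp]
    exact tendsto_finsetSum _ fun z _ => (continuous_negMulLog.tendsto _).comp
      (hφ.tendsto_measureReal_preimage_inter (hc.measurableSet_fiber z.1)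
        (hc.measurableSet_fiber z.2))
  simpa [condColorEntropy] using h.sub_const (colorEntropy μ c)

lemma entropyRate_neg [IsFiniteMeasure μ] (hφ : IsMeasurePreservingFlow μ φ) {c : M → ι}
    (hc : IsFiniteColoring c) (u : ℝ) :
    entropyRate μ (φ (-u)) c = entropyRate μ (φ u) c := by
  have h : ∀ n, colorEntropy μ (orbitColoring (φ (-u)) c n) =
      colorEntropy μ (orbitColoring (φ u) c n) := fun n => by
    rw [hφ.orbitColoring_neg, colorEntropy_comp_of_measurePreserving (hφ.measurePreserving _)
      (((hc.orbitColoring (hφ.measurePreserving u).measurable n).comp _).measurableSet_fiber),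
      colorEntropy_comp_injective Fin.rev_surjective.injective_comp_right]
  simp only [entropyRate, h]

lemma metricEntropy_neg [IsFiniteMeasure μ] (hφ : IsMeasurePreservingFlow μ φ) (u : ℝ) :
    metricEntropy (φ (-u)) μ = metricEntropy (φ u) μ := by
  simp only [metricEntropy_eq_iSup_entropyRate]
  exact iSup_congr fun c => hφ.entropyRate_neg (isFiniteColoring_iff_measurable.2 c.2) u

lemma colorEntropy_orbitColoring_le [IsProbabilityMeasure μ] (hφ : IsMeasurePreservingFlow μ φ)
    {c : M → ι} (hc : IsFiniteColoring c) {s ε : ℝ} (hs : 0 < s) {N : ℕ} (hN : 0 < N)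
    (hε : ∀ d ∈ Set.Icc (0 : ℝ) (1 / N), condColorEntropy μ (c ∘ φ d) c ≤ ε) {n m : ℕ}
    (hm : n * s ≤ m) :
    colorEntropy μ (orbitColoring (φ s) c n) ≤
      colorEntropy μ (orbitColoring (φ 1) (orbitColoring (φ (1 / N)) c N) m) + n * ε := by
  set v := orbitColoring (φ 1) (orbitColoring (φ (1 / N)) c N) m
  have hmeas : ∀ t, Measurable (φ t) := fun t => (hφ.measurePreserving t).measurable
  have hv : IsFiniteColoring v := (hc.orbitColoring (hmeas _) N).orbitColoring (hmeas 1) m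
  have hu : ∀ i : Fin n, IsFiniteColoring (c ∘ φ (i * s)) := fun i =>
    hc.comp_measurable (hmeas _)
  have horbit : orbitColoring (φ s) c n = fun x (i : Fin n) => (c ∘ φ (i * s)) x := by
    ext x i; simp [orbitColoring, hφ.iterate]
  have hstep : ∀ i : Fin n, condColorEntropy μ (c ∘ φ (i * s)) v ≤ ε := by
    intro i
    obtain ⟨a, j, hd⟩ := exists_sub_mem_Icc_of_lt hN (t := i * s) (by positivity)
      ((mul_lt_mul_of_pos_right (Nat.cast_lt.2 i.2) hs).trans_le hm)
    set τ : ℝ := a + j / N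
    -- `i * s` lies at most `1 / N` after the time `τ`, whose `c`-cell is a coordinate of `v`
    have hv_coord : (fun F => F a j) ∘ v = c ∘ φ τ := by
      ext x; simp [v, orbitColoring, hφ.iterate, hφ.apply_apply, τ]; ring_nf
    have hu_shift : c ∘ φ (i * s) = (c ∘ φ (i * s - τ)) ∘ φ τ := by
      ext x; simp [hφ.apply_apply]
    calc condColorEntropy μ (c ∘ φ (i * s)) v
        ≤ condColorEntropy μ (c ∘ φ (i * s)) ((fun F => F a j) ∘ v) :=
          condColorEntropy_le_comp (hu i) hv _
      _ = condColorEntropy μ (c ∘ φ (i * s - τ)) c := by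
          rw [hv_coord, hu_shift, condColorEntropy_comp_of_measurePreserving
            (hφ.measurePreserving τ) (hc.comp_measurable (hmeas _)) hc]
      _ ≤ ε := hε _ hd
  calc colorEntropy μ (orbitColoring (φ s) c n)
      ≤ colorEntropy μ v + condColorEntropy μ (orbitColoring (φ s) c n) v :=
        colorEntropy_le_add_condColorEntropy (hc.orbitColoring (hmeas s) n) hv
    _ ≤ colorEntropy μ v + ∑ i : Fin n, condColorEntropy μ (c ∘ φ (i * s)) v := by
        rw [horbit]; gcongr; exact condColorEntropy_pi_le hv hu
    _ ≤ colorEntropy μ v + n * ε := by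
        gcongr; simpa using Finset.sum_le_sum fun i (_ : i ∈ Finset.univ) => hstep i

theorem exists_entropyRate_le [IsProbabilityMeasure μ] (hφ : IsMeasurePreservingFlow μ φ)
    {c : M → ι} (hc : IsFiniteColoring c) {s : ℝ} (hs : 0 < s) {ε : ℝ} (hε : 0 < ε) :
    ∃ N : ℕ, entropyRate μ (φ s) c ≤
      s * entropyRate μ (φ 1) (orbitColoring (φ (1 / N)) c N) + ε := by
  obtain ⟨δ, hδ, hδε⟩ := Metric.eventually_nhds_iff.1
    ((hφ.tendsto_condColorEntropy hc).eventually (eventually_le_nhds hε))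
  obtain ⟨N, hN⟩ := exists_nat_one_div_lt hδ
  refine ⟨N + 1, ?_⟩
  have hstep : ∀ d ∈ Set.Icc (0 : ℝ) (1 / (N + 1 : ℕ)), condColorEntropy μ (c ∘ φ d) c ≤ ε :=
    fun d hd => hδε <| by
      rw [Real.dist_0_eq_abs, abs_of_nonneg hd.1]
      exact hd.2.trans_lt (by exact_mod_cast hN)
  set D := orbitColoring (φ (1 / (N + 1 : ℕ))) c (N + 1)
  have hD : IsFiniteColoring D :=
    hc.orbitColoring (hφ.measurePreserving _).measurable _
  have hbound : ∀ n : ℕ, colorEntropy μ (orbitColoring (φ s) c n) / n ≤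
      colorEntropy μ (orbitColoring (φ 1) D ⌈s * n⌉₊) / n + ε := by
    intro n
    rcases n.eq_zero_or_pos with rfl | hn
    · simpa using hε.le
    have hn' : (0 : ℝ) < n := Nat.cast_pos.2 hn
    have h := hφ.colorEntropy_orbitColoring_le hc hs N.succ_pos hstep (n := n)
      (m := ⌈s * n⌉₊) (by rw [mul_comm]; exact Nat.le_ceil _)
    rw [div_add' _ _ _ hn'.ne', div_le_div_iff_of_pos_right hn']
    linarith
  have hlim := tendsto_comp_div_of_tendsto_div (tendsto_entropyRate (hφ.measurePreserving 1) hD)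
    (tendsto_nat_ceil_atTop.comp (tendsto_natCast_atTop_atTop.const_mul_atTop hs))
    ((tendsto_nat_ceil_mul_div_atTop hs.le).comp tendsto_natCast_atTop_atTop)
  have h := le_of_tendsto_of_tendsto' (tendsto_entropyRate (hφ.measurePreserving s) hc)
    (hlim.add_const ε) hbound
  linarith

lemma exists_entropyRate_le_of_measurable [IsProbabilityMeasure μ]
    (hφ : IsMeasurePreservingFlow μ φ) {c : M → ℕ} (hc : Measurable c ∧ (Set.range c).Finite)
    {s : ℝ} (hs : 0 < s) {ε : ℝ} (hε : 0 < ε) :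
    ∃ D : {D : M → ℕ // Measurable D ∧ (Set.range D).Finite},
      entropyRate μ (φ s) c ≤ s * entropyRate μ (φ 1) D.1 + ε := by
  have hc' := isFiniteColoring_iff_measurable.2 hc
  obtain ⟨N, hN⟩ := hφ.exists_entropyRate_le hc' hs hε
  obtain ⟨enc, henc⟩ := exists_injective_nat (Fin N → ℕ)
  refine ⟨⟨enc ∘ orbitColoring (φ (1 / N)) c N, isFiniteColoring_iff_measurable.1
    ((hc'.orbitColoring (hφ.measurePreserving _).measurable N).comp enc)⟩, ?_⟩
  rwa [entropyRate_comp_injective henc]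

theorem metricEntropy_eq_mul [IsProbabilityMeasure μ] (hφ : IsMeasurePreservingFlow μ φ)
    {s : ℝ} (hs : 0 < s) : metricEntropy (φ s) μ = s * metricEntropy (φ 1) μ := by
  have : Nonempty {c : M → ℕ // Measurable c ∧ (Set.range c).Finite} :=
    ⟨⟨fun _ => 0, measurable_const, Set.finite_range_const⟩⟩
  rw [metricEntropy_eq_iSup_entropyRate, metricEntropy_eq_iSup_entropyRate,
    Real.mul_iSup_of_nonneg hs.le]
  refine Real.iSup_eq_iSup_of_forall_exists_le_add
    (fun c ε hε => hφ.exists_entropyRate_le_of_measurable c.2 hs hε) fun c ε hε => ?_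
  -- the reverse inequality is the same estimate for the flow run at speed `s`
  obtain ⟨D, hD⟩ := (hφ.comp_mul s).exists_entropyRate_le_of_measurable c.2 (inv_pos.2 hs)
    (div_pos hε hs)
  refine ⟨D, ?_⟩
  simp only [mul_inv_cancel₀ hs.ne', mul_one] at hD
  calc s * entropyRate μ (φ 1) c.1 ≤ s * (s⁻¹ * entropyRate μ (φ s) D.1 + ε / s) := by gcongr
    _ = entropyRate μ (φ s) D.1 + ε := by field_simp

end IsMeasurePreservingFlow

end Flow

/-- Abramov's formula for flow maps: for a measure-preserving flow
`Φ = {φ^t}` on a probability space and any `t ∈ ℝ`, `h_μ(φ^t) = |t| · h_μ(φ¹)`. -/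
theorem stmt10 {M : Type*} [MeasurableSpace M] (μ : Measure M) [IsProbabilityMeasure μ]
    (φ : ℝ → M → M) (hφ0 : φ 0 = id) (hφadd : ∀ s t, φ (s + t) = φ s ∘ φ t)
    (hφm : Measurable fun p : ℝ × M => φ p.1 p.2)
    (hmp : ∀ t, MeasurePreserving (φ t) μ μ) (t : ℝ) :
    metricEntropy (φ t) μ = |t| * metricEntropy (φ 1) μ := by
  have hφ : IsMeasurePreservingFlow μ φ := ⟨hφ0, hφadd, hφm, hmp⟩
  rcases lt_trichotomy t 0 with ht | rfl | ht
  · rw [← neg_neg t, hφ.metricEntropy_neg, hφ.metricEntropy_eq_mul (neg_pos.2 ht), neg_neg,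
      abs_of_neg ht]
  · simp [hφ0, metricEntropy_eq_iSup_entropyRate, entropyRate_id]
  · rw [hφ.metricEntropy_eq_mul ht, abs_of_pos ht]
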